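/- Assume q = 1 (so ∂L_{FS} = ∂L_F). Then the following are equivalent: (a) c_S ≥ 4 c_F; (b) for every n ∈ ℕ, every configuration D^w_n = {w₁, …, w_n} ⊂ ∂L_{FS} with w_{i+1} = w_i + t₁ for i = 1, …, n−1 satisfies both (i) V_n(D^w_n) = min{V_n(D) : D ∈ C_n} and (ii) V_n(D^w_n) < V_n(D_n) for every D_n ∈ C_n which either contains an atom outside ∂L_{FS}, or is contained in ∂L_{FS} but is not a set of n consecutive sites (i.e. cannot be written as {w, w + t₁, …, w + (n−1)t₁}). -/

import Mathlib

open scoped BigOperators Classical Topology ENNReal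
open Filter MeasureTheory

noncomputable section

/-!
Common setting: film lattice `L_F` with parameter `e_F = 1`, substrate spacing
`e_S = q/p` (`p, q` coprime positive integers), Heitmann–Radin potentials and the
configurational energy `V_n` (with values in `EReal`, since the Heitmann–Radin
potential takes the value `+∞` below distance `1`).
-/

/-- Points of the plane. -/
abbrev Pt : Type := ℝ × ℝ

/-- The lattice vector `t₁ = (1,0)`. -/
def t1 : Pt := ((1 : ℝ), (0 : ℝ))

/-- The lattice vector `t₂ = (1/2, √3/2)`. -/
def t2 : Pt := ((1 / 2 : ℝ), Real.sqrt 3 / 2)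

/-- Euclidean distance on `ℝ × ℝ`. -/
def dE (x y : Pt) : ℝ := Real.sqrt ((x.1 - y.1) ^ 2 + (x.2 - y.2) ^ 2)

/-- Substrate lattice spacing `e_S = q / p`. -/
def eS (p q : ℕ) : ℝ := (q : ℝ) / (p : ℝ)

/-- The film lattice `L_F = {(0, e_S) + k₁ t₁ + k₂ t₂ : k₁ ∈ ℤ, k₂ ∈ ℕ ∪ {0}}`. -/
def LF (p q : ℕ) : Set Pt :=
  {x | ∃ (k₁ : ℤ) (k₂ : ℕ), x = (((0 : ℝ), eS p q) : Pt) + (k₁ : ℝ) • t1 + (k₂ : ℝ) • t2}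

/-- The set `∂L_{FS} = {(k q, e_S) : k ∈ ℤ}` of lower-boundary film sites lying at
distance `e_S` above a substrate atom. -/
def bLFS (p q : ℕ) : Set Pt := {x | ∃ k : ℤ, x = (((k : ℝ) * (q : ℝ), eS p q) : Pt)}

/-- Crystalline configurations with `n` atoms: subsets of `L_F` of cardinality `n`. -/
def Cn (p q n : ℕ) : Set (Finset Pt) := {D | ↑D ⊆ LF p q ∧ D.card = n}

/-- The Heitmann–Radin sticky-disc potential: `+∞` for `r < 1`, `-c_F` at `r = 1`,
`0` for `r > 1`. -/
def vF (cF : ℝ) (r : ℝ) : EReal :=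
  if r < 1 then (⊤ : EReal) else if r = 1 then ((-cF : ℝ) : EReal) else (0 : EReal)

/-- The one-body substrate potential `v¹`: `-c_S` on `∂L_{FS}`, `0` otherwise. -/
def v1 (cS : ℝ) (p q : ℕ) (x : Pt) : ℝ := if x ∈ bLFS p q then -cS else 0

/-- The total energy `V_n(D) = Σ_{(x,y) ∈ D×D, x ≠ y} v_F(|x-y|) + Σ_{x ∈ D} v¹(x)`. -/
def Vn (cF cS : ℝ) (p q : ℕ) (D : Finset Pt) : EReal :=
  (∑ e ∈ D.offDiag, vF cF (dE e.1 e.2)) + (((∑ x ∈ D, v1 cS p q x) : ℝ) : EReal)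

/-- The dewetting condition: `c_S < 4c_F` if `q = 1` and `c_S < 6c_F` if `q ≠ 1`. -/
def Dewetting (cF cS : ℝ) (q : ℕ) : Prop := if q = 1 then cS < 4 * cF else cS < 6 * cF

/-- The boundary `∂D` of a configuration: atoms with fewer than `6` film neighbours. -/
def bdry (D : Finset Pt) : Finset Pt :=
  D.filter fun x => (D.filter fun y => dE x y = 1).card < 6

/-- The empirical measure `μ_{D_n} = (1/n) Σ_{x ∈ D_n} δ_{x/√n}`. -/
def emp (n : ℕ) (D : Finset Pt) : Measure Pt :=
  ((n : ℝ≥0∞))⁻¹ • ∑ x ∈ D, Measure.dirac (((Real.sqrt n)⁻¹ : ℝ) • x)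

/-- A configuration of `n` consecutive sites `{w, w + t₁, …, w + (n-1) t₁}` on `∂L_{FS}`. -/
def IsConsecutive (p q n : ℕ) (Dw : Finset Pt) : Prop :=
  ∃ w : Pt, w ∈ bLFS p q ∧ Dw = (Finset.range n).image fun i => w + (i : ℝ) • t1

/-- Two atoms joined by a chain of atoms of `D` with consecutive distances `1`. -/
def chainConn (D : Finset Pt) (x y : Pt) : Prop :=
  Relation.ReflTransGen (fun a b => a ∈ D ∧ b ∈ D ∧ dE a b = 1) x y

/-- Connectedness of a configuration. -/
def IsConnectedConf (D : Finset Pt) : Prop := ∀ x ∈ D, ∀ y ∈ D, chainConn D x y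

/-- `C` is a connected component of `D` (the set of atoms of `D` chain-connected to
some atom of `D`). -/
def IsComponent (D C : Finset Pt) : Prop :=
  ∃ x ∈ D, ∀ y : Pt, y ∈ C ↔ y ∈ D ∧ chainConn D x y

/-- Almost-connectedness: connected if `q = 1`; if `q ≠ 1`, the connected components
can be enumerated so that each one is at distance at most `q` from the union of the
previous ones. -/
def AlmostConnected (q : ℕ) (D : Finset Pt) : Prop :=
  if q = 1 then IsConnectedConf D
  else
    ∃ (k : ℕ) (f : Fin k → Finset Pt),
      Function.Injective f ∧
      (∀ i, IsComponent D (f i)) ∧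
      (∀ C : Finset Pt, IsComponent D C → ∃ i, C = f i) ∧
      (∀ i : Fin k, 1 ≤ (i : ℕ) →
        ∃ x ∈ f i, ∃ j : Fin k, j < i ∧ ∃ y ∈ f j, dE x y ≤ (q : ℝ))

/-- Local energy `E_loc(x)` of a site with respect to the configuration `D`. -/
def Eloc (cF : ℝ) (D : Finset Pt) (x : Pt) : ℝ :=
  if x ∈ D then cF * (6 - ((D.filter fun y => dE x y = 1).card : ℝ)) else 0

/-- Height `y_M` of the topmost atom of `D` in the column of `x`. -/
def yM (D : Finset Pt) (x : Pt) : ℝ := sSup {y : ℝ | ((x.1, y) : Pt) ∈ D}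

/-- The strip top `x̃ = (x¹, y_M)`. -/
def til (D : Finset Pt) (x : Pt) : Pt := (x.1, yM D x)

/-- The weight `w₊(x̃)`. -/
def wPlus (p q : ℕ) (D : Finset Pt) (x : Pt) : ℝ :=
  if x + t1 ∈ D ∧ x + t1 ∈ bLFS p q ∧ til D x + t2 = til D (x + t1) + t2 - t1 then 1 / 2 else 1

/-- The weight `w₋(x̃)`. -/
def wMinus (p q : ℕ) (D : Finset Pt) (x : Pt) : ℝ :=
  if x - t1 ∈ D ∧ x - t1 ∈ bLFS p q ∧ til D x + t2 - t1 = til D (x - t1) + t2 then 1 / 2 else 1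

/-- Lower strip energy `E_strip,below(x)`. -/
def EStripBelow (cF cS : ℝ) (p q : ℕ) (D : Finset Pt) (x : Pt) : ℝ :=
  if q = 1 then
    (1 / 2) * Eloc cF D x + (1 / 4) * Eloc cF D (x + t1) + (1 / 4) * Eloc cF D (x - t1) - cS
  else
    Eloc cF D x + (1 / 2) * Eloc cF D (x + t1) + (1 / 2) * Eloc cF D (x - t1) - cS

/-- Upper strip energy `E_strip,above(x)`. -/
def EStripAbove (cF : ℝ) (p q : ℕ) (D : Finset Pt) (x : Pt) : ℝ :=
  (if til D x ≠ x then Eloc cF D (til D x) else 0) +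
    wPlus p q D x * Eloc cF D (til D x + t2) +
    wMinus p q D x * Eloc cF D (til D x + t2 - t1)

/-- The strip energy `E_strip(x) = E_strip,below(x) + E_strip,above(x)`. -/
def EStrip (cF cS : ℝ) (p q : ℕ) (D : Finset Pt) (x : Pt) : ℝ :=
  EStripBelow cF cS p q D x + EStripAbove cF p q D x

/-- `Δ_strip`: `4c_F - c_S` if `q = 1`, `6c_F - c_S` if `q ≠ 1`. -/
def DeltaStrip (cF cS : ℝ) (q : ℕ) : ℝ := if q = 1 then 4 * cF - cS else 6 * cF - cS

/-- The union `S(∂L_{FS})` of all strips of the configuration `D`. -/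
def SLFS (p q : ℕ) (D : Finset Pt) : Finset Pt :=
  D.filter fun y => ∃ x, x ∈ D ∧ x ∈ bLFS p q ∧
    (y = x ∨ y = x + t1 ∨ y = x - t1 ∨ y = til D x ∨ y = til D x + t2 ∨ y = til D x + t2 - t1)

/-- The rescaled energy `E_n(μ_{D_n}) = n^{-1/2} (V_n(D_n) + 6 c_F n)`. -/
def En (cF cS : ℝ) (p q n : ℕ) (D : Finset Pt) : EReal :=
  ((((Real.sqrt n)⁻¹ : ℝ)) : EReal) * (Vn cF cS p q D + ((6 * cF * (n : ℝ) : ℝ) : EReal))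

/-!
In lattice coordinates `(k₁, k₂) ∈ ℤ × ℕ` every bond is horizontal or joins an atom to one of
its two lower neighbours. Counting horizontal bonds by their left atom and the other bonds by their
upper atom gives `#bonds + 2R + 4B ≤ 6n`, where `R` is the number of atoms without a right
neighbour (at least one per occupied row) and `B` the number of atoms without a lower neighbour
(all `s` substrate atoms, plus a lowest atom if `s = 0`). Hence
`V_n(D) - V_n(D^w_n) ≥ 2c_F (R - 1) + 4c_F (B - s) + (c_S - 4c_F)(n - s)`,
which is nonnegative when `c_S ≥ 4c_F` and vanishes only for the wetting chain.
Conversely, when `c_S < 4c_F`, a double row of `2m` atoms beats the chain for large `m`.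
-/

open Finset

/-- `latticePoint e (k₁, k₂) = (0, e) + k₁ t₁ + k₂ t₂`. -/
def latticePoint (e : ℝ) (k : ℤ × ℕ) : Pt := ((k.1 : ℝ) + k.2 / 2, e + k.2 * (√3 / 2))

lemma latticePoint_injective (e : ℝ) : Function.Injective (latticePoint e) := by
  rintro ⟨a₁, a₂⟩ ⟨b₁, b₂⟩ h
  simp only [latticePoint, Prod.mk.injEq] at h
  have h₂ : (a₂ : ℝ) = b₂ := mul_right_cancel₀ (by positivity : √3 / 2 ≠ 0) (add_left_cancel h.2)
  have h₁ : (a₁ : ℝ) = b₁ := by linarith [h.1]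
  exact Prod.ext (by exact_mod_cast h₁) (by exact_mod_cast h₂)

lemma LF_eq_range (p q : ℕ) : LF p q = Set.range (latticePoint (eS p q)) := by
  have h (k : ℤ × ℕ) :
      latticePoint (eS p q) k = ((0 : ℝ), eS p q) + (k.1 : ℝ) • t1 + (k.2 : ℝ) • t2 :=
    Prod.ext (by simp [latticePoint, t1, t2, div_eq_mul_inv]) (by simp [latticePoint, t1, t2])
  ext x
  simp only [LF, Set.mem_ofPred_eq, Set.mem_range, Prod.exists, h, eq_comm]

lemma latticePoint_mem_bLFS_one_iff {p : ℕ} {k : ℤ × ℕ} :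
    latticePoint (eS p 1) k ∈ bLFS p 1 ↔ k.2 = 0 := by
  constructor
  · rintro ⟨m, hm⟩
    have h : eS p 1 + k.2 * (√3 / 2) = eS p 1 := congrArg Prod.snd hm
    simpa [(by positivity : √3 / 2 ≠ 0)] using h
  · intro h
    exact ⟨k.1, by simp [latticePoint, h]⟩

lemma bLFS_one_eq_range (p : ℕ) :
    bLFS p 1 = Set.range fun a : ℤ => latticePoint (eS p 1) (a, 0) := by
  ext x
  simp [bLFS, latticePoint, eq_comm]

lemma latticePoint_add_smul_t1 (e : ℝ) (a : ℤ) (i : ℕ) :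
    latticePoint e (a, 0) + (i : ℝ) • t1 = latticePoint e (a + i, 0) := by
  simp [latticePoint, t1]

lemma dE_latticePoint (e : ℝ) (k l : ℤ × ℕ) :
    dE (latticePoint e k) (latticePoint e l) =
      √(((k.1 - l.1) ^ 2 + (k.1 - l.1) * ((k.2 : ℤ) - l.2) + ((k.2 : ℤ) - l.2) ^ 2 : ℤ) : ℝ) := by
  have h3 : √3 ^ 2 = 3 := Real.sq_sqrt (by norm_num)
  unfold dE latticePoint
  push_cast
  congr 1
  linear_combination (((k.2 : ℝ) - l.2) ^ 2 / 4) * h3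

lemma one_le_sq_add_mul_add_sq {a b : ℤ} (h : a ≠ 0 ∨ b ≠ 0) : 1 ≤ a ^ 2 + a * b + b ^ 2 := by
  by_contra! h'
  have hb : b = 0 := by nlinarith [sq_nonneg (2 * a + b), sq_nonneg b]
  have ha : a = 0 := by subst hb; nlinarith
  tauto

lemma sq_add_mul_add_sq_eq_one_iff {a b : ℤ} : a ^ 2 + a * b + b ^ 2 = 1 ↔
    (b = 0 ∧ (a = 1 ∨ a = -1)) ∨ (b = 1 ∧ (a = 0 ∨ a = -1)) ∨ (b = -1 ∧ (a = 0 ∨ a = 1)) := by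
  constructor
  · intro h
    have ha : -1 ≤ a ∧ a ≤ 1 := by constructor <;> nlinarith [sq_nonneg (a + 2 * b)]
    have hb : -1 ≤ b ∧ b ≤ 1 := by constructor <;> nlinarith [sq_nonneg (2 * a + b)]
    obtain ⟨ha₁, ha₂⟩ := ha
    obtain ⟨hb₁, hb₂⟩ := hb
    interval_cases a <;> interval_cases b <;> simp_all
  · rintro (⟨rfl, rfl | rfl⟩ | ⟨rfl, rfl | rfl⟩ | ⟨rfl, rfl | rfl⟩) <;> norm_num

def IsRightNbr (k l : ℤ × ℕ) : Prop := l.1 = k.1 + 1 ∧ l.2 = k.2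

def IsLowerNbr (k l : ℤ × ℕ) : Prop := k.2 + 1 = l.2 ∧ (k.1 = l.1 ∨ k.1 = l.1 + 1)

def LatticeAdj (k l : ℤ × ℕ) : Prop :=
  IsRightNbr k l ∨ IsRightNbr l k ∨ IsLowerNbr k l ∨ IsLowerNbr l k

lemma LatticeAdj.symm {k l : ℤ × ℕ} (h : LatticeAdj k l) : LatticeAdj l k := by
  unfold LatticeAdj at *
  tauto

lemma one_le_dE_latticePoint {e : ℝ} {k l : ℤ × ℕ} (h : k ≠ l) :
    1 ≤ dE (latticePoint e k) (latticePoint e l) := by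
  rw [dE_latticePoint, Real.one_le_sqrt]
  have hne : k.1 - l.1 ≠ 0 ∨ (k.2 : ℤ) - l.2 ≠ 0 := by
    contrapose! h
    exact Prod.ext (by omega) (by omega)
  exact_mod_cast one_le_sq_add_mul_add_sq hne

lemma dE_latticePoint_eq_one_iff {e : ℝ} {k l : ℤ × ℕ} :
    dE (latticePoint e k) (latticePoint e l) = 1 ↔ LatticeAdj k l := by
  have : LatticeAdj k l ↔
      (k.1 - l.1) ^ 2 + (k.1 - l.1) * ((k.2 : ℤ) - l.2) + ((k.2 : ℤ) - l.2) ^ 2 = 1 := by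
    rw [sq_add_mul_add_sq_eq_one_iff, LatticeAdj, IsRightNbr, IsRightNbr, IsLowerNbr, IsLowerNbr]
    omega
  rw [dE_latticePoint, Real.sqrt_eq_one, this]
  exact_mod_cast Iff.rfl

def adjPairs (T : Finset (ℤ × ℕ)) : Finset ((ℤ × ℕ) × (ℤ × ℕ)) :=
  T.offDiag.filter fun e => LatticeAdj e.1 e.2

def latticeEnergy (cF cS : ℝ) (T : Finset (ℤ × ℕ)) : ℝ :=
  -cF * #(adjPairs T) - cS * #(T.filter fun k => k.2 = 0)

lemma EReal.coe_finset_sum {α : Type*} (s : Finset α) (f : α → ℝ) :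
    ((∑ a ∈ s, f a : ℝ) : EReal) = ∑ a ∈ s, (f a : EReal) :=
  map_sum (⟨⟨((↑) : ℝ → EReal), EReal.coe_zero⟩, EReal.coe_add⟩ : ℝ →+ EReal) f s

lemma Finset.offDiag_image_of_injective {α β : Type*} [DecidableEq α] [DecidableEq β]
    {f : α → β} (hf : Function.Injective f) (s : Finset α) :
    (s.image f).offDiag = s.offDiag.image (Prod.map f f) := by
  ext ⟨x, y⟩
  simp only [mem_offDiag, mem_image, Prod.exists, Prod.map, Prod.mk.injEq]
  constructor
  · rintro ⟨⟨a, ha, rfl⟩, ⟨b, hb, rfl⟩, hne⟩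
    exact ⟨a, b, ⟨ha, hb, fun h => hne (h ▸ rfl)⟩, rfl, rfl⟩
  · rintro ⟨a, b, ⟨ha, hb, hne⟩, rfl, rfl⟩
    exact ⟨⟨a, ha, rfl⟩, ⟨b, hb, rfl⟩, hf.ne hne⟩

theorem Vn_image_latticePoint (cF cS : ℝ) (p : ℕ) (T : Finset (ℤ × ℕ)) :
    Vn cF cS p 1 (T.image (latticePoint (eS p 1))) = latticeEnergy cF cS T := by
  set φ := latticePoint (eS p 1)
  have hinj : Function.Injective φ := latticePoint_injective _
  have hbond : ∀ e ∈ T.offDiag, vF cF (dE (Prod.map φ φ e).1 (Prod.map φ φ e).2) =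
      ((if LatticeAdj e.1 e.2 then -cF else 0 : ℝ) : EReal) := by
    intro e he
    rw [Prod.map_fst, Prod.map_snd, vF,
      if_neg (one_le_dE_latticePoint (mem_offDiag.mp he).2.2).not_gt]
    simp only [φ, dE_latticePoint_eq_one_iff]
    split_ifs <;> rfl
  have hsite : ∀ k ∈ T, v1 cS p 1 (φ k) = if k.2 = 0 then -cS else 0 :=
    fun k _ => by simp only [v1, φ, latticePoint_mem_bLFS_one_iff]
  rw [Vn, offDiag_image_of_injective hinj, sum_image (fun _ _ _ _ h =>
      Prod.map_injective.mpr ⟨hinj, hinj⟩ h), sum_congr rfl hbond, ← EReal.coe_finset_sum,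
    ← EReal.coe_add, sum_image (fun _ _ _ _ h => hinj h), sum_congr rfl hsite, ← sum_filter,
    ← sum_filter, sum_const, sum_const, nsmul_eq_mul, nsmul_eq_mul, latticeEnergy, adjPairs]
  congr 1
  ring

lemma exists_eq_image_of_mem_Cn {p q n : ℕ} {D : Finset Pt} (hD : D ∈ Cn p q n) :
    ∃ T : Finset (ℤ × ℕ), D = T.image (latticePoint (eS p q)) ∧ #T = n := by
  obtain ⟨hLF, rfl⟩ := hD
  rw [LF_eq_range, ← Set.image_univ, subset_set_image_iff] at hLF
  obtain ⟨T, -, rfl⟩ := hLF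
  exact ⟨T, rfl, (card_image_of_injective _ (latticePoint_injective _)).symm⟩

lemma image_mem_Cn (p q : ℕ) (T : Finset (ℤ × ℕ)) :
    T.image (latticePoint (eS p q)) ∈ Cn p q #T := by
  refine ⟨?_, card_image_of_injective _ (latticePoint_injective _)⟩
  rw [coe_image, LF_eq_range]
  exact Set.image_subset_range _ _

section Counting

variable (T : Finset (ℤ × ℕ))

def rightEnds : Finset (ℤ × ℕ) := T.filter fun k => (k.1 + 1, k.2) ∉ T

def bottoms : Finset (ℤ × ℕ) := T.filter fun l => ∀ k ∈ T, ¬IsLowerNbr k l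

def rightPairs : Finset ((ℤ × ℕ) × (ℤ × ℕ)) := (T ×ˢ T).filter fun e => IsRightNbr e.1 e.2

def lowerPairs : Finset ((ℤ × ℕ) × (ℤ × ℕ)) := (T ×ˢ T).filter fun e => IsLowerNbr e.1 e.2

lemma card_adjPairs_le : #(adjPairs T) ≤ 2 * (#(rightPairs T) + #(lowerPairs T)) := by
  have hsub : adjPairs T ⊆
      (rightPairs T ∪ lowerPairs T) ∪ (rightPairs T ∪ lowerPairs T).image Prod.swap := by
    intro e he
    simp only [adjPairs, mem_filter, mem_offDiag] at he
    obtain ⟨⟨h₁, h₂, -⟩, hadj⟩ := he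
    simp only [mem_union, mem_image, rightPairs, lowerPairs, mem_filter, mem_product]
    rcases hadj with (h | h | h | h : LatticeAdj _ _)
    · exact Or.inl (Or.inl ⟨⟨h₁, h₂⟩, h⟩)
    · exact Or.inr ⟨e.swap, Or.inl ⟨⟨h₂, h₁⟩, h⟩, e.swap_swap⟩
    · exact Or.inl (Or.inr ⟨⟨h₁, h₂⟩, h⟩)
    · exact Or.inr ⟨e.swap, Or.inr ⟨⟨h₂, h₁⟩, h⟩, e.swap_swap⟩
  calc #(adjPairs T) ≤ 2 * #(rightPairs T ∪ lowerPairs T) := by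
        grw [card_le_card hsub, card_union_le, card_image_le]; omega
    _ ≤ _ := by grw [card_union_le]

lemma card_rightPairs_add_card_rightEnds : #(rightPairs T) + #(rightEnds T) = #T := by
  have : rightPairs T =
      (T.filter fun k => (k.1 + 1, k.2) ∈ T).image fun k => (k, (k.1 + 1, k.2)) := by
    ext ⟨k, l⟩
    simp only [rightPairs, mem_filter, mem_product, mem_image, Prod.mk.injEq]
    unfold IsRightNbr
    constructor
    · rintro ⟨⟨hk, hl⟩, h₁, h₂⟩
      exact ⟨k, ⟨hk, by rwa [← h₁, ← h₂]⟩, rfl, Prod.ext h₁.symm h₂.symm⟩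
    · rintro ⟨k, ⟨hk, hk'⟩, rfl, rfl⟩
      exact ⟨⟨hk, hk'⟩, rfl, rfl⟩
  rw [this, card_image_of_injective _ (fun _ _ h => (Prod.mk.inj h).1), rightEnds,
    card_filter_add_card_filter_not]

/-- Each atom has at most two lower neighbours, and the atoms of `bottoms T` have none. -/
lemma card_lowerPairs_add_two_mul_card_bottoms :
    #(lowerPairs T) + 2 * #(bottoms T) ≤ 2 * #T := by
  have hfibre : ∀ l ∈ (lowerPairs T).image Prod.snd,
      #((lowerPairs T).filter fun e => e.2 = l) ≤ 2 := by
    intro l _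
    calc #((lowerPairs T).filter fun e => e.2 = l)
        ≤ #({((l.1, l.2 - 1), l), ((l.1 + 1, l.2 - 1), l)} : Finset ((ℤ × ℕ) × (ℤ × ℕ))) := by
          refine card_le_card fun e he => ?_
          simp only [lowerPairs, mem_filter] at he
          obtain ⟨⟨-, hlev, hcol⟩, rfl⟩ := he
          simp only [mem_insert, mem_singleton, Prod.ext_iff, and_true]
          omega
      _ ≤ 2 := card_le_two
  have himage : (lowerPairs T).image Prod.snd ⊆ T.filter fun l => ¬∀ k ∈ T, ¬IsLowerNbr k l := by
    intro l hl
    simp only [lowerPairs, mem_image, mem_filter, mem_product] at hl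
    obtain ⟨e, ⟨⟨he₁, he₂⟩, he⟩, rfl⟩ := hl
    simp only [mem_filter, not_forall, not_not]
    exact ⟨he₂, e.1, he₁, he⟩
  have := card_le_mul_card_image _ 2 hfibre
  have := card_le_card himage
  have := card_filter_add_card_filter_not (s := T) fun l => ∀ k ∈ T, ¬IsLowerNbr k l
  rw [← bottoms] at this
  omega

theorem card_adjPairs_add_le : #(adjPairs T) + 2 * #(rightEnds T) + 4 * #(bottoms T) ≤ 6 * #T := by
  have := card_adjPairs_le T
  have := card_rightPairs_add_card_rightEnds T
  have := card_lowerPairs_add_two_mul_card_bottoms T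
  omega

end Counting

section Structure

variable {T : Finset (ℤ × ℕ)}

lemma exists_mem_rightEnds_of_mem {k : ℤ × ℕ} (hk : k ∈ T) : ∃ r ∈ rightEnds T, r.2 = k.2 := by
  obtain ⟨r, hr, hmax⟩ :=
    (T.filter fun l => l.2 = k.2).exists_max_image Prod.fst ⟨k, mem_filter.mpr ⟨hk, rfl⟩⟩
  rw [mem_filter] at hr
  refine ⟨r, mem_filter.mpr ⟨hr.1, fun hr' => ?_⟩, hr.2⟩
  have := hmax _ (mem_filter.mpr ⟨hr', hr.2⟩)
  omega

lemma one_le_card_rightEnds (hT : T.Nonempty) : 1 ≤ #(rightEnds T) := by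
  obtain ⟨k, hk⟩ := hT
  obtain ⟨r, hr, -⟩ := exists_mem_rightEnds_of_mem hk
  exact card_pos.mpr ⟨r, hr⟩

lemma two_le_card_rightEnds {k l : ℤ × ℕ} (hk : k ∈ T) (hl : l ∈ T) (hkl : k.2 ≠ l.2) :
    2 ≤ #(rightEnds T) := by
  obtain ⟨r, hr, hrk⟩ := exists_mem_rightEnds_of_mem hk
  obtain ⟨r', hr', hrl⟩ := exists_mem_rightEnds_of_mem hl
  exact one_lt_card.mpr ⟨r, hr, r', hr', fun h => hkl (by rw [← hrk, ← hrl, h])⟩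

lemma filter_level_zero_subset_bottoms : T.filter (fun k => k.2 = 0) ⊆ bottoms T := by
  intro k hk
  rw [mem_filter] at hk
  exact mem_filter.mpr ⟨hk.1, fun l _ h => by have := h.1; omega⟩

lemma exists_mem_bottoms_le (hT : T.Nonempty) : ∃ b ∈ bottoms T, ∀ k ∈ T, b.2 ≤ k.2 := by
  obtain ⟨b, hb, hmin⟩ := T.exists_min_image Prod.snd hT
  exact ⟨b, mem_filter.mpr ⟨hb, fun k hk h => by have := hmin k hk; have := h.1; omega⟩, hmin⟩

end Structure

/-- The lattice coordinates of the wetting configuration `{w, w + t₁, …, w + (n-1)t₁}` with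
`w = latticePoint _ (a, 0)`. -/
def wettingChain (a : ℤ) (n : ℕ) : Finset (ℤ × ℕ) := (range n).image fun i : ℕ => (a + (i : ℤ), 0)

lemma mem_wettingChain {a : ℤ} {n : ℕ} {k : ℤ × ℕ} :
    k ∈ wettingChain a n ↔ k.2 = 0 ∧ a ≤ k.1 ∧ k.1 < a + n := by
  simp only [wettingChain, mem_image, mem_range]
  constructor
  · rintro ⟨i, hi, rfl⟩
    omega
  · rintro ⟨h₂, h₁, h₁'⟩
    exact ⟨(k.1 - a).toNat, by omega, Prod.ext (by dsimp only; omega) h₂.symm⟩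

lemma card_wettingChain (a : ℤ) (n : ℕ) : #(wettingChain a n) = n := by
  rw [wettingChain, card_image_of_injective _ (fun i j h => by simpa using h), card_range]

lemma wettingChain_succ (a : ℤ) (n : ℕ) :
    wettingChain a (n + 1) = insert (a + n, 0) (wettingChain a n) := by
  ext k
  simp only [mem_insert, mem_wettingChain, Prod.ext_iff]
  omega

lemma isConsecutive_one_iff {p n : ℕ} {D : Finset Pt} :
    IsConsecutive p 1 n D ↔ ∃ a, D = (wettingChain a n).image (latticePoint (eS p 1)) := by
  simp only [IsConsecutive, bLFS_one_eq_range, Set.exists_range_iff, wettingChain, image_image]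
  refine exists_congr fun a => Eq.congr_right ?_
  ext x
  simp [← latticePoint_add_smul_t1]

lemma eq_wettingChain_of_card_rightEnds_le_one {T : Finset (ℤ × ℕ)} (hT : T.Nonempty)
    (hline : ∀ k ∈ T, k.2 = 0) (hR : #(rightEnds T) ≤ 1) : ∃ a, T = wettingChain a #T := by
  obtain ⟨l, hl, hmin⟩ := T.exists_min_image Prod.fst hT
  obtain ⟨r, hr, hmax⟩ := T.exists_max_image Prod.fst hT
  have hstep : ∀ k ∈ T, k.1 ≠ r.1 → (k.1 + 1, 0) ∈ T := by
    intro k hk hkr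
    by_contra h
    have hkR : k ∈ rightEnds T := mem_filter.mpr ⟨hk, by rwa [hline k hk]⟩
    have hrR : r ∈ rightEnds T := mem_filter.mpr ⟨hr, fun h' => by have := hmax _ h'; omega⟩
    exact hkr (congrArg Prod.fst (card_le_one.mp hR k hkR r hrR))
  have hfill : ∀ d : ℕ, l.1 + d ≤ r.1 → (l.1 + d, 0) ∈ T := by
    intro d
    induction d with
    | zero => intro; rw [Nat.cast_zero, add_zero, ← hline l hl]; exact hl
    | succ d ih =>
      intro hd
      have := hstep _ (ih (by omega)) (by dsimp only; omega)
      simpa [add_assoc] using this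
  have hT_eq : T = wettingChain l.1 (r.1 - l.1 + 1).toNat := by
    ext k
    rw [mem_wettingChain]
    constructor
    · intro hk
      exact ⟨hline k hk, hmin k hk, by have := hmax k hk; omega⟩
    · rintro ⟨h₂, h₁, h₁'⟩
      have := hfill (k.1 - l.1).toNat (by omega)
      rwa [show l.1 + (k.1 - l.1).toNat = k.1 by omega, ← h₂] at this
  exact ⟨l.1, by rw [hT_eq, card_wettingChain]⟩

/-- A lowest atom is a bottom, and a second occupied row would add a right end. -/
lemma exists_eq_wettingChain {T : Finset (ℤ × ℕ)} (hT : T.Nonempty)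
    (hB : #(bottoms T) ≤ #(T.filter fun k => k.2 = 0)) (hR : #(rightEnds T) ≤ 1) :
    ∃ a, T = wettingChain a #T := by
  have hbottoms : T.filter (fun k => k.2 = 0) = bottoms T :=
    eq_of_subset_of_card_le filter_level_zero_subset_bottoms hB
  obtain ⟨b, hb, -⟩ := exists_mem_bottoms_le hT
  rw [← hbottoms, mem_filter] at hb
  refine eq_wettingChain_of_card_rightEnds_le_one hT (fun k hk => ?_) hR
  by_contra hk0
  have := two_le_card_rightEnds hb.1 hk (by omega)
  omega

lemma card_adjPairs_insert_ge {T N : Finset (ℤ × ℕ)} {x : ℤ × ℕ} (hx : x ∉ T) (hN : N ⊆ T)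
    (hadj : ∀ y ∈ N, LatticeAdj x y) : #(adjPairs T) + 2 * #N ≤ #(adjPairs (insert x T)) := by
  have hxN : x ∉ N := fun h => hx (hN h)
  have hsub : adjPairs T ∪ N.image (fun y => (x, y)) ∪ N.image (fun y => (y, x)) ⊆
      adjPairs (insert x T) := by
    intro e he
    simp only [mem_union, mem_image, adjPairs, mem_filter, mem_offDiag, mem_insert] at he ⊢
    rcases he with (⟨⟨h₁, h₂, hne⟩, he⟩ | ⟨y, hy, rfl⟩) | ⟨y, hy, rfl⟩
    · exact ⟨⟨Or.inr h₁, Or.inr h₂, hne⟩, he⟩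
    · exact ⟨⟨Or.inl rfl, Or.inr (hN hy), (ne_of_mem_of_not_mem hy hxN).symm⟩, hadj y hy⟩
    · exact ⟨⟨Or.inr (hN hy), Or.inl rfl, ne_of_mem_of_not_mem hy hxN⟩, (hadj y hy).symm⟩
  have hd₁ : Disjoint (adjPairs T) (N.image fun y => (x, y)) := by
    refine disjoint_left.mpr fun e he he' => ?_
    obtain ⟨y, -, rfl⟩ := mem_image.mp he'
    exact hx (mem_offDiag.mp (mem_filter.mp he).1).1
  have hd₂ : Disjoint (adjPairs T ∪ N.image fun y => (x, y)) (N.image fun y => (y, x)) := by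
    refine disjoint_left.mpr fun e he he' => ?_
    obtain ⟨y, hy, rfl⟩ := mem_image.mp he'
    rcases mem_union.mp he with he | he
    · exact hx (mem_offDiag.mp (mem_filter.mp he).1).2.1
    · obtain ⟨z, -, hz⟩ := mem_image.mp he
      exact hxN (by rwa [(Prod.mk.inj hz).1])
  have := card_le_card hsub
  rw [card_union_of_disjoint hd₂, card_union_of_disjoint hd₁,
    card_image_of_injective _ (fun _ _ h => (Prod.mk.inj h).2),
    card_image_of_injective _ (fun _ _ h => (Prod.mk.inj h).1)] at this
  omega

lemma card_adjPairs_wettingChain (a : ℤ) (n : ℕ) :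
    #(adjPairs (wettingChain a n)) = 2 * (n - 1) := by
  have hge : ∀ n, 2 * n ≤ #(adjPairs (wettingChain a n)) + 2 := by
    intro n
    induction n with
    | zero => omega
    | succ n ih =>
      rcases n with _ | m
      · omega
      have hx : (a + (m + 1 : ℕ), 0) ∉ wettingChain a (m + 1) := by rw [mem_wettingChain]; omega
      have hN : {(a + m, 0)} ⊆ wettingChain a (m + 1) :=
        singleton_subset_iff.mpr (mem_wettingChain.mpr ⟨rfl, by omega, by omega⟩)
      have hadj : ∀ y ∈ ({(a + m, 0)} : Finset (ℤ × ℕ)), LatticeAdj (a + (m + 1 : ℕ), 0) y := by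
        simp only [mem_singleton, forall_eq]
        exact Or.inr (Or.inl ⟨by push_cast; ring, rfl⟩)
      have := card_adjPairs_insert_ge hx hN hadj
      rw [card_singleton, ← wettingChain_succ] at this
      omega
  rcases n.eq_zero_or_pos with rfl | hn
  · rfl
  have hne : (wettingChain a n).Nonempty := by
    rw [← card_pos, card_wettingChain]
    exact hn
  have hle := card_adjPairs_add_le (wettingChain a n)
  have hR := one_le_card_rightEnds hne
  have hB := card_le_card (filter_level_zero_subset_bottoms (T := wettingChain a n))
  rw [filter_true_of_mem fun k hk => (mem_wettingChain.mp hk).1] at hB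
  have := hge n
  rw [card_wettingChain] at hle hB
  omega

lemma latticeEnergy_wettingChain (cF cS : ℝ) (a : ℤ) {n : ℕ} (hn : 0 < n) :
    latticeEnergy cF cS (wettingChain a n) = -2 * cF * (n - 1) - cS * n := by
  rw [latticeEnergy, card_adjPairs_wettingChain,
    filter_true_of_mem fun k hk => (mem_wettingChain.mp hk).1, card_wettingChain, Nat.cast_mul,
    Nat.cast_sub hn]
  push_cast
  ring

section Comparison

variable {cF cS : ℝ} {T : Finset (ℤ × ℕ)}

lemma excess_le_latticeEnergy (hcF : 0 ≤ cF) :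
    2 * cF * (#(rightEnds T) - 1) + 4 * cF * (#(bottoms T) - #(T.filter fun k => k.2 = 0))
        + (cS - 4 * cF) * (#T - #(T.filter fun k => k.2 = 0))
      ≤ latticeEnergy cF cS T + 2 * cF * (#T - 1) + cS * #T := by
  have h : (#(adjPairs T) : ℝ) + 2 * #(rightEnds T) + 4 * #(bottoms T) ≤ 6 * #T := by
    exact_mod_cast card_adjPairs_add_le T
  have := mul_le_mul_of_nonneg_left h hcF
  rw [latticeEnergy]
  linarith

theorem le_latticeEnergy (hcF : 0 ≤ cF) (hcS : 4 * cF ≤ cS) (hT : T.Nonempty) :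
    -2 * cF * (#T - 1) - cS * #T ≤ latticeEnergy cF cS T := by
  have hR : (1 : ℝ) ≤ #(rightEnds T) := by exact_mod_cast one_le_card_rightEnds hT
  have hB : (#(T.filter fun k => k.2 = 0) : ℝ) ≤ #(bottoms T) := by
    exact_mod_cast card_le_card filter_level_zero_subset_bottoms
  have hs : (#(T.filter fun k => k.2 = 0) : ℝ) ≤ #T := by exact_mod_cast card_filter_le _ _
  have := excess_le_latticeEnergy (cS := cS) (T := T) hcF
  linarith [mul_nonneg hcF (sub_nonneg.mpr hR), mul_nonneg hcF (sub_nonneg.mpr hB),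
    mul_nonneg (sub_nonneg.mpr hcS) (sub_nonneg.mpr hs)]

theorem lt_latticeEnergy (hcF : 0 < cF) (hcS : 4 * cF ≤ cS) (hT : ∀ a, T ≠ wettingChain a #T) :
    -2 * cF * (#T - 1) - cS * #T < latticeEnergy cF cS T := by
  have hne : T.Nonempty := by
    rw [nonempty_iff_ne_empty]
    rintro rfl
    exact hT 0 rfl
  have hR : (1 : ℝ) ≤ #(rightEnds T) := by exact_mod_cast one_le_card_rightEnds hne
  have hB : (#(T.filter fun k => k.2 = 0) : ℝ) ≤ #(bottoms T) := by
    exact_mod_cast card_le_card filter_level_zero_subset_bottoms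
  have hs : (#(T.filter fun k => k.2 = 0) : ℝ) ≤ #T := by exact_mod_cast card_filter_le _ _
  by_contra! hle
  have := excess_le_latticeEnergy (cS := cS) (T := T) hcF.le
  have hR' : (#(rightEnds T) : ℝ) ≤ 1 := by
    nlinarith [mul_nonneg hcF.le (sub_nonneg.mpr hB),
      mul_nonneg (sub_nonneg.mpr hcS) (sub_nonneg.mpr hs)]
  have hB' : (#(bottoms T) : ℝ) ≤ #(T.filter fun k => k.2 = 0) := by
    nlinarith [mul_nonneg hcF.le (sub_nonneg.mpr hR),
      mul_nonneg (sub_nonneg.mpr hcS) (sub_nonneg.mpr hs)]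
  obtain ⟨a, ha⟩ := exists_eq_wettingChain hne (by exact_mod_cast hB') (by exact_mod_cast hR')
  exact hT a ha

end Comparison

def doubleRow (m : ℕ) : Finset (ℤ × ℕ) := (range m ×ˢ range 2).image fun i => ((i.1 : ℤ), i.2)

lemma mem_doubleRow {m : ℕ} {k : ℤ × ℕ} : k ∈ doubleRow m ↔ 0 ≤ k.1 ∧ k.1 < m ∧ k.2 < 2 := by
  simp only [doubleRow, mem_image, mem_product, mem_range, Prod.exists]
  constructor
  · rintro ⟨i, j, ⟨hi, hj⟩, rfl⟩
    omega
  · rintro ⟨h₀, h₁, h₂⟩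
    exact ⟨k.1.toNat, k.2, ⟨by omega, h₂⟩, Prod.ext (by dsimp only; omega) rfl⟩

lemma card_doubleRow (m : ℕ) : #(doubleRow m) = 2 * m := by
  rw [doubleRow, card_image_of_injective _ (fun i j h => by
    simp only [Prod.mk.injEq, Nat.cast_inj] at h; exact Prod.ext h.1 h.2), card_product,
    card_range, card_range, mul_comm]

lemma card_filter_doubleRow (m : ℕ) : #((doubleRow m).filter fun k => k.2 = 0) = m := by
  have : (doubleRow m).filter (fun k => k.2 = 0) = wettingChain 0 m := by
    ext k
    rw [mem_filter, mem_doubleRow, mem_wettingChain]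
    omega
  rw [this, card_wettingChain]

lemma doubleRow_succ (m : ℕ) :
    doubleRow (m + 1) = insert ((m : ℤ), 1) (insert ((m : ℤ), 0) (doubleRow m)) := by
  ext k
  simp only [mem_insert, mem_doubleRow, Prod.ext_iff]
  omega

lemma card_adjPairs_doubleRow_ge (m : ℕ) : 8 * m ≤ #(adjPairs (doubleRow m)) + 6 := by
  induction m with
  | zero => omega
  | succ m ih =>
    have hx₀ : ((m : ℤ), 0) ∉ doubleRow m := by rw [mem_doubleRow]; omega
    have hx₁ : ((m : ℤ), 1) ∉ insert ((m : ℤ), 0) (doubleRow m) := by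
      rw [mem_insert, mem_doubleRow]; simp
    rw [doubleRow_succ]
    rcases m with _ | j
    · have := card_adjPairs_insert_ge hx₁ (N := {(0, 0)}) (by simp)
        (by simp [LatticeAdj, IsLowerNbr])
      rw [card_singleton] at this
      omega
    · have h₀ := card_adjPairs_insert_ge hx₀ (N := {((j : ℤ), 0), ((j : ℤ), 1)})
        (by intro k; simp only [mem_insert, mem_singleton, mem_doubleRow, Prod.ext_iff]; omega)
        (by simp only [mem_insert, mem_singleton, forall_eq_or_imp, forall_eq]
            simp [LatticeAdj, IsRightNbr, IsLowerNbr])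
      have h₁ := card_adjPairs_insert_ge hx₁ (N := {(((j + 1 : ℕ) : ℤ), 0), ((j : ℤ), 1)})
        (by intro k; simp only [mem_insert, mem_singleton, mem_doubleRow, Prod.ext_iff]; omega)
        (by simp only [mem_insert, mem_singleton, forall_eq_or_imp, forall_eq]
            simp [LatticeAdj, IsRightNbr, IsLowerNbr])
      rw [card_pair (by simp)] at h₀ h₁
      omega

theorem exists_latticeEnergy_doubleRow_lt {cF cS : ℝ} (hcF : 0 < cF) (hcS : cS < 4 * cF) :
    ∃ m, latticeEnergy cF cS (doubleRow m) < latticeEnergy cF cS (wettingChain 0 (2 * m)) := by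
  obtain ⟨m, hm⟩ := exists_nat_gt (4 * cF / (4 * cF - cS))
  have hm' : 4 * cF < (4 * cF - cS) * m := by rwa [div_lt_iff₀' (by linarith)] at hm
  have hpos : 0 < m := by
    have : (0 : ℝ) < m := by nlinarith
    exact_mod_cast this
  refine ⟨m, ?_⟩
  have hadj : (8 * m : ℝ) ≤ #(adjPairs (doubleRow m)) + 6 := by
    exact_mod_cast card_adjPairs_doubleRow_ge m
  rw [latticeEnergy_wettingChain _ _ _ (by omega), latticeEnergy, card_filter_doubleRow]
  push_cast
  nlinarith [mul_le_mul_of_nonneg_left hadj hcF.le]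

theorem wetting_regime_q_eq_one_general
    (cF cS : ℝ) (hcF : 0 < cF)
    (p q : ℕ) (hq1 : q = 1) :
    4 * cF ≤ cS ↔
      ∀ n : ℕ, ∀ Dw : Finset Pt, IsConsecutive p q n Dw →
        ((∀ D ∈ Cn p q n, Vn cF cS p q Dw ≤ Vn cF cS p q D) ∧
          (∀ D ∈ Cn p q n,
            ((∃ x ∈ D, x ∉ bLFS p q) ∨ (↑D ⊆ bLFS p q ∧ ¬ IsConsecutive p q n D)) →
            Vn cF cS p q Dw < Vn cF cS p q D)) := by
  subst hq1
  constructor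
  · intro hcS n Dw hDw
    obtain ⟨a, rfl⟩ := isConsecutive_one_iff.mp hDw
    refine ⟨fun D hD => ?_, fun D hD hbad => ?_⟩ <;>
      obtain ⟨T, rfl, rfl⟩ := exists_eq_image_of_mem_Cn hD <;>
      simp only [Vn_image_latticePoint, EReal.coe_le_coe_iff, EReal.coe_lt_coe_iff]
    · rcases T.eq_empty_or_nonempty with rfl | hT
      · rfl
      rw [latticeEnergy_wettingChain _ _ _ hT.card_pos]
      exact le_latticeEnergy hcF.le hcS hT
    · have hT : ∀ b, T ≠ wettingChain b #T := by
        intro b hb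
        rw [hb, card_wettingChain] at hbad
        rcases hbad with ⟨x, hx, hxb⟩ | ⟨-, hnc⟩
        · obtain ⟨k, hk, rfl⟩ := mem_image.mp hx
          exact hxb (latticePoint_mem_bLFS_one_iff.mpr (mem_wettingChain.mp hk).1)
        · exact hnc (isConsecutive_one_iff.mpr ⟨b, rfl⟩)
      have hpos : 0 < #T := card_pos.mpr (nonempty_iff_ne_empty.mpr fun h => hT 0 (by rw [h]; rfl))
      rw [latticeEnergy_wettingChain _ _ _ hpos]
      exact lt_latticeEnergy hcF hcS hT
  · intro hmin
    by_contra! hcS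
    obtain ⟨m, hm⟩ := exists_latticeEnergy_doubleRow_lt hcF hcS
    have hchain : IsConsecutive p 1 (2 * m)
        ((wettingChain 0 (2 * m)).image (latticePoint (eS p 1))) :=
      isConsecutive_one_iff.mpr ⟨0, rfl⟩
    have := (hmin _ _ hchain).1 _ (card_doubleRow m ▸ image_mem_Cn p 1 (doubleRow m))
    rw [Vn_image_latticePoint, Vn_image_latticePoint, EReal.coe_le_coe_iff] at this
    linarith

/-- for `q = 1`, the consecutive wetting configurations are the
(strict) minimizers for every `n` iff `c_S ≥ 4 c_F`. -/
theorem wetting_regime_q_eq_one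
    (cF cS : ℝ) (hcF : 0 < cF) (hcS : 0 < cS)
    (p q : ℕ) (hp : 0 < p) (hq : 0 < q) (hpq : Nat.Coprime p q) (hq1 : q = 1) :
    4 * cF ≤ cS ↔
      ∀ n : ℕ, ∀ Dw : Finset Pt, IsConsecutive p q n Dw →
        ((∀ D ∈ Cn p q n, Vn cF cS p q Dw ≤ Vn cF cS p q D) ∧
          (∀ D ∈ Cn p q n,
            ((∃ x ∈ D, x ∉ bLFS p q) ∨ (↑D ⊆ bLFS p q ∧ ¬ IsConsecutive p q n D)) →
            Vn cF cS p q Dw < Vn cF cS p q D)) :=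
  wetting_regime_q_eq_one_general cF cS hcF p q hq1
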